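/- arXiv:1611.04705 — 8 statements merged into one kernel-verified Lean document; each statement's English description precedes it below -/
import Mathlib

section
/- Density optimality, minimal cardinality (Theorem 1): Let c : Fin λ → ℝ≥0 and k : ℝ≥0. Suppose R : Finset (Fin λ) satisfies: (i) for every b ∈ R and every b' ∉ R, c b' ≤ c b (R consists of blocks of highest density); (ii) ∑_{b ∈ R} c b ≥ k; and (iii) there exists b₀ ∈ R with c b₀ ≤ c b for all b ∈ R and ∑_{b ∈ R.erase b₀} c b < k (R stops as soon as k records are guaranteed). Then every S : Finset (Fin λ) with ∑_{b ∈ S} c b ≥ k satisfies R.card ≤ S.card. -/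
/-!
Call `T` a top set for `c` if every block in `T` has at least the count of every block outside
it. Removing a least block from a top set leaves a top set, and a top set carries the largest
total among all sets of at most its size: swap the blocks of `S \ T` for those of `T \ S`, each
of which is at least as large. Hence any `S` smaller than `R` has total at most that of
`R.erase b₀`, which is below `k`.
-/

open Finset

section

variable {ι M : Type*}

def IsTopSet [LE M] (c : ι → M) (T : Finset ι) : Prop :=
  ∀ b ∈ T, ∀ b' ∉ T, c b' ≤ c b

theorem IsTopSet.erase [LE M] [DecidableEq ι] {c : ι → M} {T : Finset ι} {b₀ : ι}
    (hT : IsTopSet c T) (hmin : ∀ b ∈ T, c b₀ ≤ c b) : IsTopSet c (T.erase b₀) := by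
  intro b hb b' hb'
  by_cases h : b' = b₀
  · exact h ▸ hmin b (mem_of_mem_erase hb)
  · exact hT b (mem_of_mem_erase hb) b' fun hb'T => hb' (mem_erase.2 ⟨h, hb'T⟩)

variable [AddCommMonoid M] [LinearOrder M] [IsOrderedAddMonoid M] [CanonicallyOrderedAdd M]

theorem Finset.sum_le_sum_of_card_le_of_forall_le {f : ι → M} {A B : Finset ι}
    (hcard : #A ≤ #B) (hle : ∀ a ∈ A, ∀ b ∈ B, f a ≤ f b) :
    ∑ a ∈ A, f a ≤ ∑ b ∈ B, f b := by
  rcases B.eq_empty_or_nonempty with rfl | hB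
  · simp_all
  obtain ⟨m, hmB, hm⟩ := B.exists_min_image f hB
  calc ∑ a ∈ A, f a ≤ #A • f m := sum_le_card_nsmul _ _ _ fun a ha => hle a ha m hmB
    _ ≤ #B • f m := nsmul_le_nsmul_left zero_le hcard
    _ ≤ ∑ b ∈ B, f b := card_nsmul_le_sum _ _ _ hm

theorem IsTopSet.sum_le_of_card_le [DecidableEq ι] {c : ι → M} {T S : Finset ι}
    (hT : IsTopSet c T) (hcard : #S ≤ #T) : ∑ b ∈ S, c b ≤ ∑ b ∈ T, c b := by
  rw [← sum_inter_add_sum_sdiff S T, ← sum_inter_add_sum_sdiff T S, inter_comm]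
  gcongr 1
  exact sum_le_sum_of_card_le_of_forall_le (card_sdiff_le_card_sdiff_iff.2 hcard)
    fun b' hb' b hb => hT b (mem_sdiff.1 hb).1 b' (mem_sdiff.1 hb').2

end

theorem density_optimal_min_card_general {lam : ℕ} (c : Fin lam → NNReal) (k : NNReal)
    (R : Finset (Fin lam))
    (h_top : ∀ b ∈ R, ∀ b' ∉ R, c b' ≤ c b)
    (h_stop : ∃ b₀ ∈ R, (∀ b ∈ R, c b₀ ≤ c b) ∧ ∑ b ∈ R.erase b₀, c b < k) :
    ∀ S : Finset (Fin lam), k ≤ ∑ b ∈ S, c b → R.card ≤ S.card := by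
  obtain ⟨b₀, hb₀, hmin, hlt⟩ := h_stop
  intro S hS
  by_contra! hcard
  have hS_le : #S ≤ #(R.erase b₀) := by rw [card_erase_of_mem hb₀]; omega
  have hsum := (IsTopSet.erase h_top hmin).sum_le_of_card_le hS_le
  exact (hS.trans hsum).not_gt hlt

/-- Density optimality, minimal cardinality (Theorem 1): if `R` consists of blocks of
highest density, has total count at least `k`, and stops as soon as `k` records are
guaranteed, then `R` has minimal cardinality among all block sets with total count
at least `k`. -/
theorem density_optimal_min_card {lam : ℕ} (c : Fin lam → NNReal) (k : NNReal)
    (R : Finset (Fin lam))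
    (h_top : ∀ b ∈ R, ∀ b' ∉ R, c b' ≤ c b)
    (h_ge : k ≤ ∑ b ∈ R, c b)
    (h_stop : ∃ b₀ ∈ R, (∀ b ∈ R, c b₀ ≤ c b) ∧ ∑ b ∈ R.erase b₀, c b < k) :
    ∀ S : Finset (Fin lam), k ≤ ∑ b ∈ S, c b → R.card ≤ S.card :=
  density_optimal_min_card_general c k R h_top h_stop
end

section
/- Threshold invariant of the Density-Optimal algorithm: for every position i : Fin λ and every block b : Fin λ, if for every predicate p : Fin γ the block b does not occur among the first positions 0,…,i of the sorted order for p (i.e. i < (σ p).symm b), then the aggregate density of b is at most the threshold: f (fun p => d p b) ≤ θ i. -/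
/-- Threshold invariant of the Density-Optimal algorithm: if a block `b` does not
occur among the first `i+1` positions of any predicate's sorted order, then its
aggregate density is at most the threshold `θ i`. -/
theorem density_optimal_threshold_invariant {lam gam : ℕ}
    (d : Fin gam → Fin lam → ℝ)
    (σ : Fin gam → Equiv.Perm (Fin lam))
    (hσ : ∀ p : Fin gam, Antitone (fun j : Fin lam => d p (σ p j)))
    (f : (Fin gam → ℝ) → ℝ) (hf : Monotone f)
    (θ : Fin lam → ℝ) (hθ : ∀ i : Fin lam, θ i = f (fun p => d p (σ p i)))
    (i b : Fin lam)
    (hb : ∀ p : Fin gam, i < (σ p).symm b) :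
    f (fun p => d p b) ≤ θ i := by
  rw [hθ]
  apply hf
  intro p
  have h := hσ p (le_of_lt (hb p))
  simpa using h
end

section
/- Locality optimality (Theorem 2): Suppose a ≤ b and ∑_{j ∈ Finset.Icc a b} c j ≥ k. Then the least index j with a ≤ j and ∑_{l ∈ Finset.Icc a j} c l ≥ k exists and satisfies j ≤ b. Consequently, writing e a for this least index whenever it exists, the minimum of e a − a over all starting blocks a for which e a exists equals the minimum of b − a over all windows [a,b] with ∑_{j ∈ Finset.Icc a b} c j ≥ k; that is, the family of windows {[a, e a]} considered by the sliding-window algorithm contains a window of globally minimal length whose total count of valid records is at least k. -/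
lemma locality_aux (c : ℕ → NNReal) (k : NNReal) (a b : ℕ)
    (hab : a ≤ b) (hk : k ≤ ∑ j ∈ Finset.Icc a b, c j) :
    IsLeast {j | a ≤ j ∧ k ≤ ∑ l ∈ Finset.Icc a j, c l}
        (sInf {j | a ≤ j ∧ k ≤ ∑ l ∈ Finset.Icc a j, c l}) ∧
      sInf {j | a ≤ j ∧ k ≤ ∑ l ∈ Finset.Icc a j, c l} ≤ b := by
  have hb : b ∈ {j | a ≤ j ∧ k ≤ ∑ l ∈ Finset.Icc a j, c l} := ⟨hab, hk⟩
  have hne : {j | a ≤ j ∧ k ≤ ∑ l ∈ Finset.Icc a j, c l}.Nonempty := ⟨b, hb⟩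
  exact ⟨⟨Nat.sInf_mem hne, fun x hx => Nat.sInf_le hx⟩, Nat.sInf_le hb⟩

/-- Locality optimality (Theorem 2): if the window `[a, b]` has total count at least
`k`, then the least end `e a` of a window starting at `a` with total count at least
`k` exists and is at most `b`; consequently the minimal length `e a' - a'` over all
starting blocks `a'` (for which `e a'` exists) equals the minimal length `b' - a'`
over all windows `[a', b']` with total count at least `k`. -/
theorem locality_optimal (c : ℕ → NNReal) (k : NNReal) (a b : ℕ)
    (hab : a ≤ b) (hk : k ≤ ∑ j ∈ Finset.Icc a b, c j) :
    (IsLeast {j | a ≤ j ∧ k ≤ ∑ l ∈ Finset.Icc a j, c l}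
        (sInf {j | a ≤ j ∧ k ≤ ∑ l ∈ Finset.Icc a j, c l}) ∧
      sInf {j | a ≤ j ∧ k ≤ ∑ l ∈ Finset.Icc a j, c l} ≤ b) ∧
    sInf {m | ∃ a' : ℕ, {j | a' ≤ j ∧ k ≤ ∑ l ∈ Finset.Icc a' j, c l}.Nonempty ∧
          m = sInf {j | a' ≤ j ∧ k ≤ ∑ l ∈ Finset.Icc a' j, c l} - a'} =
      sInf {m | ∃ a' b' : ℕ, a' ≤ b' ∧ k ≤ ∑ j ∈ Finset.Icc a' b', c j ∧ m = b' - a'} := by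
  refine ⟨locality_aux c k a b hab hk, le_antisymm ?_ ?_⟩
  · -- sInf first ≤ sInf second
    set T := {m | ∃ a' b' : ℕ, a' ≤ b' ∧ k ≤ ∑ j ∈ Finset.Icc a' b', c j ∧ m = b' - a'}
    have hTne : T.Nonempty := ⟨b - a, a, b, hab, hk, rfl⟩
    obtain ⟨a', b', h1, h2, h3⟩ := Nat.sInf_mem hTne
    obtain ⟨⟨hmem, _⟩, hle⟩ := locality_aux c k a' b' h1 h2
    calc sInf {m | ∃ a'' : ℕ, {j | a'' ≤ j ∧ k ≤ ∑ l ∈ Finset.Icc a'' j, c l}.Nonempty ∧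
          m = sInf {j | a'' ≤ j ∧ k ≤ ∑ l ∈ Finset.Icc a'' j, c l} - a''}
        ≤ sInf {j | a' ≤ j ∧ k ≤ ∑ l ∈ Finset.Icc a' j, c l} - a' :=
          Nat.sInf_le ⟨a', ⟨_, hmem⟩, rfl⟩
      _ ≤ b' - a' := Nat.sub_le_sub_right hle _
      _ = sInf T := h3.symm
  · -- sInf second ≤ sInf first
    have hne : {m | ∃ a' : ℕ, {j | a' ≤ j ∧ k ≤ ∑ l ∈ Finset.Icc a' j, c l}.Nonempty ∧
          m = sInf {j | a' ≤ j ∧ k ≤ ∑ l ∈ Finset.Icc a' j, c l} - a'}.Nonempty := by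
      exact ⟨_, a, ⟨b, hab, hk⟩, rfl⟩
    obtain ⟨a', hS, h3⟩ := Nat.sInf_mem hne
    have hmem := Nat.sInf_mem hS
    exact h3 ▸ Nat.sInf_le ⟨a', _, hmem.1, hmem.2, rfl⟩
end

section
/- Prefix-optimality recurrence for the IO-Optimal dynamic program: for every block i : Fin λ and every s : ℝ≥0 with c i < s, C s i = ⨅_{j : Fin λ, j < i} (C (s − c i) j + RandIO j i), where s − c i denotes truncated subtraction in ℝ≥0 and the infimum over an empty family is ⊤. -/
open scoped ENNReal

/-- I/O cost of fetching a finite set of blocks in increasing order: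
`κ` plus the sum of `RandIO` costs between consecutive fetched blocks. -/
noncomputable def ioCost {lam : ℕ} (κ : NNReal) (RandIO : Fin lam → Fin lam → NNReal)
    (Ω : Finset (Fin lam)) : NNReal :=
  κ + (((Ω.sort (· ≤ ·)).zip (Ω.sort (· ≤ ·)).tail).map (fun p => RandIO p.1 p.2)).sum

/-- `ioC s i`: infimum of `ioCost Ω` over finite block sets `Ω` with `i ∈ Ω`,
every element of `Ω` at most `i`, and total count at least `s` (`⊤` if none exists). -/
noncomputable def ioC {lam : ℕ} (κ : NNReal) (RandIO : Fin lam → Fin lam → NNReal)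
    (c : Fin lam → NNReal) (s : NNReal) (i : Fin lam) : ℝ≥0∞ :=
  ⨅ (Ω : Finset (Fin lam)) (_ : i ∈ Ω) (_ : ∀ b ∈ Ω, b ≤ i)
    (_ : s ≤ ∑ b ∈ Ω, c b), (ioCost κ RandIO Ω : ℝ≥0∞)

/-- `ioOpt s i`: infimum of `ioCost Ω` over nonempty finite block sets `Ω` with
every element at most `i` and total count at least `s`. -/
noncomputable def ioOpt {lam : ℕ} (κ : NNReal) (RandIO : Fin lam → Fin lam → NNReal)
    (c : Fin lam → NNReal) (s : NNReal) (i : Fin lam) : ℝ≥0∞ :=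
  ⨅ (Ω : Finset (Fin lam)) (_ : Ω.Nonempty) (_ : ∀ b ∈ Ω, b ≤ i)
    (_ : s ≤ ∑ b ∈ Ω, c b), (ioCost κ RandIO Ω : ℝ≥0∞)

/-! A set `Ω` feasible for `ioC s i` with `c i < s` contains, besides `i`, a largest block
`j < i`; removing `i` leaves a set feasible for `ioC (s - c i) j` whose cost is smaller by exactly
the last transition cost `RandIO j i`. Conversely, appending `i` to any set feasible for
`ioC (s - c i) j` with `j < i` yields a set feasible for `ioC s i`. -/

theorem List.sum_map_zip_tail_append_pair {α M : Type*} [AddCommMonoid M] (f : α × α → M)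
    (l : List α) (x a : α) :
    (((l ++ [x, a]).zip (l ++ [x, a]).tail).map f).sum =
      (((l ++ [x]).zip (l ++ [x]).tail).map f).sum + f (x, a) := by
  induction l with
  | nil => simp
  | cons y l ih =>
    cases l with
    | nil => simp
    | cons z l => simp_all [add_assoc]

theorem Finset.sort_insert_of_forall_lt {α : Type*} [LinearOrder α] {s : Finset α} {a : α}
    (h : ∀ b ∈ s, b < a) : (insert a s).sort (· ≤ ·) = s.sort (· ≤ ·) ++ [a] := by
  refine (Finset.sortedLT_sort _).eq_of_mem_iff ?_ fun b => by simp [or_comm]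
  rw [List.sortedLT_iff_pairwise, List.pairwise_append]
  exact ⟨(Finset.sortedLT_sort s).pairwise, by simp, by simpa using h⟩

section ioC

variable {lam : ℕ} (κ : NNReal) (RandIO : Fin lam → Fin lam → NNReal) (c : Fin lam → NNReal)

theorem ioCost_insert_of_lt {Ω : Finset (Fin lam)} {i j : Fin lam} (hj : j ∈ Ω)
    (hle : ∀ b ∈ Ω, b ≤ j) (hji : j < i) :
    ioCost κ RandIO (insert i Ω) = ioCost κ RandIO Ω + RandIO j i := by
  have hsort : Ω.sort (· ≤ ·) = (Ω.erase j).sort (· ≤ ·) ++ [j] := by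
    conv_lhs => rw [← Finset.insert_erase hj]
    exact Finset.sort_insert_of_forall_lt fun b hb =>
      (hle b (Finset.mem_of_mem_erase hb)).lt_of_ne (Finset.ne_of_mem_erase hb)
  have hsort' : (insert i Ω).sort (· ≤ ·) = (Ω.erase j).sort (· ≤ ·) ++ [j, i] := by
    rw [Finset.sort_insert_of_forall_lt fun b hb => (hle b hb).trans_lt hji, hsort]
    simp
  rw [ioCost, ioCost, hsort', hsort, List.sum_map_zip_tail_append_pair, add_assoc]

variable {κ RandIO c}

theorem ioC_le_ioCost {s : NNReal} {i : Fin lam} {Ω : Finset (Fin lam)} (hi : i ∈ Ω)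
    (hle : ∀ b ∈ Ω, b ≤ i) (hs : s ≤ ∑ b ∈ Ω, c b) :
    ioC κ RandIO c s i ≤ ioCost κ RandIO Ω :=
  iInf_le_of_le Ω <| iInf_le_of_le hi <| iInf_le_of_le hle <| iInf_le _ hs

theorem le_ioC {s : NNReal} {i : Fin lam} {a : ℝ≥0∞}
    (h : ∀ Ω : Finset (Fin lam), i ∈ Ω → (∀ b ∈ Ω, b ≤ i) → s ≤ ∑ b ∈ Ω, c b →
      a ≤ ioCost κ RandIO Ω) :
    a ≤ ioC κ RandIO c s i :=
  le_iInf fun Ω => le_iInf₂ fun hi hle => le_iInf (h Ω hi hle)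

theorem ioC_le_ioC_tsub_add {s : NNReal} {i j : Fin lam} (hji : j < i) :
    ioC κ RandIO c s i ≤ ioC κ RandIO c (s - c i) j + RandIO j i := by
  rw [← tsub_le_iff_right]
  refine le_ioC fun Ω hj hle hsum => tsub_le_iff_right.2 ?_
  have hlt : ∀ b ∈ Ω, b < i := fun b hb => (hle b hb).trans_lt hji
  have hi : i ∉ Ω := fun hi => (hlt i hi).false
  calc ioC κ RandIO c s i ≤ ioCost κ RandIO (insert i Ω) := by
        refine ioC_le_ioCost (Finset.mem_insert_self i Ω) ?_ ?_
        · simpa using fun b hb => (hlt b hb).le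
        · rw [Finset.sum_insert hi]
          exact le_add_tsub.trans (add_le_add_right hsum _)
    _ = ioCost κ RandIO Ω + RandIO j i := by
        rw [ioCost_insert_of_lt κ RandIO hj hle hji, ENNReal.coe_add]

theorem exists_lt_ioC_tsub_add_le_ioCost {s : NNReal} {i : Fin lam} {Ω : Finset (Fin lam)}
    (hs : c i < s) (hi : i ∈ Ω) (hle : ∀ b ∈ Ω, b ≤ i) (hsum : s ≤ ∑ b ∈ Ω, c b) :
    ∃ j < i, ioC κ RandIO c (s - c i) j + RandIO j i ≤ ioCost κ RandIO Ω := by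
  have hsum' : s - c i ≤ ∑ b ∈ Ω.erase i, c b := by
    rwa [tsub_le_iff_left, Finset.add_sum_erase _ _ hi]
  have hne : (Ω.erase i).Nonempty := by
    refine Finset.nonempty_iff_ne_empty.2 fun h => ?_
    rw [h, Finset.sum_empty, nonpos_iff_eq_zero, tsub_eq_zero_iff_le] at hsum'
    exact hs.not_ge hsum'
  set j := (Ω.erase i).max' hne
  have hj : j ∈ Ω.erase i := Finset.max'_mem _ hne
  have hji : j < i := (hle j (Finset.mem_of_mem_erase hj)).lt_of_ne (Finset.ne_of_mem_erase hj)
  have hjmax : ∀ b ∈ Ω.erase i, b ≤ j := fun b hb => Finset.le_max' _ b hb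
  refine ⟨j, hji, ?_⟩
  calc ioC κ RandIO c (s - c i) j + RandIO j i
      ≤ ioCost κ RandIO (Ω.erase i) + RandIO j i := by
        gcongr
        exact ioC_le_ioCost hj hjmax hsum'
    _ = ioCost κ RandIO Ω := by
        rw [← ENNReal.coe_add, ← ioCost_insert_of_lt κ RandIO hj hjmax hji,
          Finset.insert_erase hi]

end ioC

/-- Prefix-optimality recurrence for the IO-Optimal dynamic program. -/
theorem ioC_recurrence {lam : ℕ} (κ : NNReal) (RandIO : Fin lam → Fin lam → NNReal)
    (c : Fin lam → NNReal) (i : Fin lam) (s : NNReal) (hs : c i < s) :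
    ioC κ RandIO c s i =
      ⨅ (j : Fin lam) (_ : j < i),
        (ioC κ RandIO c (s - c i) j + (RandIO j i : ℝ≥0∞)) := by
  refine le_antisymm (le_iInf₂ fun j hji => ioC_le_ioC_tsub_add hji) (le_ioC ?_)
  intro Ω hi hle hsum
  obtain ⟨j, hji, hj⟩ := exists_lt_ioC_tsub_add_le_ioCost hs hi hle hsum
  exact iInf₂_le_of_le j hji hj
end

section
/- Constant-cost simplification of the IO-Optimal recurrence: suppose there are t : ℕ and κ' : ℝ≥0 such that RandIO j i = κ' whenever (i : ℕ) − (j : ℕ) > t. Then for every s : ℝ≥0 and all blocks i, m : Fin λ with (i : ℕ) − (m : ℕ) > t, ⨅_{j : Fin λ, j ≤ m} (C s j + RandIO j i) = Opt s m + κ'. -/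
open scoped ENNReal

/-- Constant-cost simplification of the IO-Optimal recurrence: if `RandIO j i` is a
constant `κ'` whenever the blocks are more than `t` apart, then the inner infimum of
the recurrence over `j ≤ m` collapses to `ioOpt s m + κ'` for blocks `i` more than
`t` past `m`. -/
theorem ioC_constant_tail {lam : ℕ} (κ : NNReal) (RandIO : Fin lam → Fin lam → NNReal)
    (c : Fin lam → NNReal) (t : ℕ) (κ' : NNReal)
    (hconst : ∀ j i : Fin lam, (i : ℕ) - (j : ℕ) > t → RandIO j i = κ') :
    ∀ (s : NNReal) (i m : Fin lam), (i : ℕ) - (m : ℕ) > t →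
      (⨅ (j : Fin lam) (_ : j ≤ m), (ioC κ RandIO c s j + (RandIO j i : ℝ≥0∞)))
        = ioOpt κ RandIO c s m + (κ' : ℝ≥0∞) := by
  intro s i m him
  have hR : ∀ j : Fin lam, j ≤ m → RandIO j i = κ' := fun j hj =>
    hconst j i (lt_of_lt_of_le him (Nat.sub_le_sub_left hj (i : ℕ)))
  have h1 : (⨅ (j : Fin lam) (_ : j ≤ m), (ioC κ RandIO c s j + (RandIO j i : ℝ≥0∞)))
      = (⨅ (j : Fin lam) (_ : j ≤ m), ioC κ RandIO c s j) + (κ' : ℝ≥0∞) := by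
    rw [ENNReal.iInf_add]
    refine iInf_congr fun j => ?_
    rw [ENNReal.iInf_add]
    exact iInf_congr fun hj => by rw [hR j hj]
  rw [h1]
  congr 1
  apply le_antisymm
  · simp only [ioOpt, le_iInf_iff]
    intro Ω hne hle hsum
    have hjm : Ω.max' hne ≤ m := hle _ (Ω.max'_mem hne)
    refine le_trans (iInf_le_of_le (Ω.max' hne) (iInf_le _ hjm)) ?_
    simp only [ioC]
    refine iInf_le_of_le Ω (iInf_le_of_le (Ω.max'_mem hne) ?_)
    exact iInf_le_of_le (fun b hb => Ω.le_max' b hb) (iInf_le _ hsum)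
  · simp only [le_iInf_iff]
    intro j hj
    simp only [ioC, ioOpt, le_iInf_iff]
    intro Ω hmem hle hsum
    refine iInf_le_of_le Ω (iInf_le_of_le ⟨j, hmem⟩ ?_)
    exact iInf_le_of_le (fun b hb => le_trans (hle b hb) hj) (iInf_le _ hsum)
end

section
/- Characterization of Opt by C: for every s : ℝ≥0 and every block i : Fin λ, Opt s i = ⨅_{j : Fin λ, j ≤ i} C s j. -/
open scoped ENNReal

/-- Characterization of `ioOpt` by `ioC`: the optimal cost over the first blocks up
to `i` is the infimum of the prefix-constrained costs `ioC s j` over `j ≤ i`. -/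
theorem ioOpt_eq_iInf_ioC {lam : ℕ} (κ : NNReal) (RandIO : Fin lam → Fin lam → NNReal)
    (c : Fin lam → NNReal) (s : NNReal) (i : Fin lam) :
    ioOpt κ RandIO c s i = ⨅ (j : Fin lam) (_ : j ≤ i), ioC κ RandIO c s j := by
  apply le_antisymm
  · refine le_iInf fun j => le_iInf fun hj => ?_
    refine le_iInf fun Ω => le_iInf fun hiΩ => le_iInf fun hle => le_iInf fun hs => ?_
    exact iInf_le_of_le Ω (iInf_le_of_le ⟨j, hiΩ⟩ (iInf_le_of_le
      (fun b hb => (hle b hb).trans hj) (iInf_le_of_le hs le_rfl)))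
  · refine le_iInf fun Ω => le_iInf fun hΩ => le_iInf fun hle => le_iInf fun hs => ?_
    refine iInf_le_of_le (Ω.max' hΩ) (iInf_le_of_le (hle _ (Ω.max'_mem hΩ)) ?_)
    exact iInf_le_of_le Ω (iInf_le_of_le (Ω.max'_mem hΩ) (iInf_le_of_le
      (fun b hb => Finset.le_max' Ω b hb) (iInf_le_of_le hs le_rfl)))
end

section
/- Bellman recurrence for Opt (Theorem 3, IO-Optimal correctness): for every s : ℝ≥0 and all blocks i, i' : Fin λ with (i' : ℕ) + 1 = (i : ℕ), Opt s i = min (C s i) (Opt s i'). -/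
open scoped ENNReal

/-- Bellman recurrence for `ioOpt` (Theorem 3, IO-Optimal correctness): either block
`i` is among the fetched blocks, or the optimum is that of the first `i - 1` blocks. -/
theorem ioOpt_recurrence {lam : ℕ} (κ : NNReal) (RandIO : Fin lam → Fin lam → NNReal)
    (c : Fin lam → NNReal) (s : NNReal) (i i' : Fin lam)
    (h : (i' : ℕ) + 1 = (i : ℕ)) :
    ioOpt κ RandIO c s i = min (ioC κ RandIO c s i) (ioOpt κ RandIO c s i') := by
  have hi'i : i' ≤ i := by
    rw [Fin.le_def]; omega
  unfold ioOpt ioC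
  apply le_antisymm
  · apply le_min
    · refine le_iInf fun Ω => le_iInf fun hi => le_iInf fun hle => le_iInf fun hs => ?_
      exact iInf₂_le_of_le Ω ⟨i, hi⟩ (iInf₂_le_of_le hle hs le_rfl)
    · refine le_iInf fun Ω => le_iInf fun hne => le_iInf fun hle => le_iInf fun hs => ?_
      exact iInf₂_le_of_le Ω hne
        (iInf₂_le_of_le (fun b hb => (hle b hb).trans hi'i) hs le_rfl)
  · refine le_iInf fun Ω => le_iInf fun hne => le_iInf fun hle => le_iInf fun hs => ?_
    by_cases hi : i ∈ Ω
    · exact (min_le_left _ _).trans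
        (iInf₂_le_of_le Ω hi (iInf₂_le_of_le hle hs le_rfl))
    · refine (min_le_right _ _).trans
        (iInf₂_le_of_le Ω hne (iInf₂_le_of_le (fun b hb => ?_) hs le_rfl))
      have h1 : (b : ℕ) ≤ i := hle b hb
      have h2 : b ≠ i := fun e => hi (e ▸ hb)
      rw [Fin.le_def]
      have : (b : ℕ) ≠ (i : ℕ) := fun e => h2 (Fin.ext e)
      omega
end

section
/- Variance of the Horvitz–Thompson estimator under two-phase sampling: with S_c ⊆ S_v fixed, n = (S_v \ S_c).card ≥ 2, 1 ≤ r ≤ n, and S_r a simple random sample of size r from S_v \ S_c, the variance of the Horvitz–Thompson estimator, Var(τ̂_HT) = E[(τ̂_HT − τ)²], equals ∑_{i ∈ S_v} ((1 − π i)/π i) · (τ i)² + ∑_{i ∈ S_v} ∑_{j ∈ S_v, j ≠ i} ((π' i j − π i · π j)/(π i · π j)) · τ i · τ j. -/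
/-!
On a sample `S ⊆ U`, the error of the Horvitz–Thompson estimator is
`∑ i ∈ U, (𝟙[i ∈ S] / π i - 1) * y i`. Squaring and averaging over the design, the product of
the residuals of `i` and `j` averages to `(π_ij - π_i π_j) / (π_i π_j)`, which on the diagonal
(`π_ii = π_i`) is `(1 - π_i) / π_i`: this is the general variance formula. For a simple random
sample of `r` out of `n`, a fixed `k`-set lies in `C(n - k, r - k)` of the `C(n, r)` samples, so
its inclusion probability is `C(r, k) / C(n, k)`, i.e. `r / n` and `r (r - 1) / (n (n - 1))`.
The blocks of `S_c` are always fetched, so `π_i = 1` and `π'_ij = π_i π_j` whenever `i` or `j`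
lies in `S_c`, and their terms vanish.
-/

open Finset

section

variable {α : Type*} [DecidableEq α]

theorem Finset.sum_sum_erase_eq_of_subset {M : Type*} [AddCommMonoid M] {s t : Finset α}
    (hst : s ⊆ t) {f : α → α → M}
    (hf : ∀ i ∈ t, ∀ j ∈ t, i ≠ j → i ∉ s ∨ j ∉ s → f i j = 0) :
    ∑ i ∈ s, ∑ j ∈ s.erase i, f i j = ∑ i ∈ t, ∑ j ∈ t.erase i, f i j := by
  rw [← sum_subset hst fun i hi his ↦ sum_eq_zero fun j hj ↦
    hf i hi j (mem_of_mem_erase hj) (ne_of_mem_erase hj).symm (.inl his)]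
  refine sum_congr rfl fun i hi ↦ sum_subset (erase_subset_erase i hst) fun j hj hjs ↦ ?_
  have hji := ne_of_mem_erase hj
  exact hf i (hst hi) j (mem_of_mem_erase hj) hji.symm (.inr fun h ↦ hjs (mem_erase.2 ⟨hji, h⟩))

noncomputable def htVariance (U : Finset α) (π : α → ℝ) (π' : α → α → ℝ) (y : α → ℝ) : ℝ :=
  ∑ i ∈ U, (1 - π i) / π i * y i ^ 2
    + ∑ i ∈ U, ∑ j ∈ U.erase i, (π' i j - π i * π j) / (π i * π j) * y i * y j

theorem htVariance_congr {U : Finset α} {π₁ π₂ : α → ℝ} {π₁' π₂' : α → α → ℝ}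
    (hπ : ∀ i ∈ U, π₁ i = π₂ i) (hπ' : ∀ i ∈ U, ∀ j ∈ U.erase i, π₁' i j = π₂' i j)
    (y : α → ℝ) : htVariance U π₁ π₁' y = htVariance U π₂ π₂' y := by
  rw [htVariance, htVariance]
  congr 1
  · exact sum_congr rfl fun i hi ↦ by rw [hπ i hi]
  · exact sum_congr rfl fun i hi ↦ sum_congr rfl fun j hj ↦ by
      rw [hπ i hi, hπ j (mem_of_mem_erase hj), hπ' i hi j hj]

theorem htVariance_subset {s t : Finset α} (hst : s ⊆ t) {π : α → ℝ} {π' : α → α → ℝ}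
    (hπ : ∀ i ∈ t, i ∉ s → π i = 1)
    (hπ' : ∀ i ∈ t, ∀ j ∈ t, i ≠ j → i ∉ s ∨ j ∉ s → π' i j = π i * π j) (y : α → ℝ) :
    htVariance s π π' y = htVariance t π π' y := by
  rw [htVariance, htVariance, sum_subset hst fun i hi his ↦ by rw [hπ i hi his]; simp,
    sum_sum_erase_eq_of_subset hst fun i hi j hj hij hst' ↦ by
      rw [hπ' i hi j hj hij hst', sub_self, zero_div, zero_mul, zero_mul]]

/-- Under the design drawing one of the samples in `D` uniformly at random, the probability that
the sample contains `s`; `inclusionProb D {i}` and `inclusionProb D {i, j}` are the first- and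
second-order inclusion probabilities. -/
noncomputable def inclusionProb (D : Finset (Finset α)) (s : Finset α) : ℝ :=
  #{S ∈ D | s ⊆ S} / #D

theorem sum_ite_subset_eq_card_mul_inclusionProb (D : Finset (Finset α)) (s : Finset α) :
    ∑ S ∈ D, (if s ⊆ S then (1 : ℝ) else 0) = #D * inclusionProb D s := by
  rw [sum_boole, inclusionProb, mul_div_cancel_of_imp']
  intro hD0
  rw [Nat.cast_eq_zero, card_eq_zero] at hD0
  simp [hD0]

noncomputable def htResidual (D : Finset (Finset α)) (S : Finset α) (i : α) : ℝ :=
  (if i ∈ S then 1 else 0) / inclusionProb D {i} - 1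

theorem sum_div_inclusionProb_sub_sum {D : Finset (Finset α)} {S U : Finset α} (hSU : S ⊆ U)
    (y : α → ℝ) :
    ∑ i ∈ S, y i / inclusionProb D {i} - ∑ i ∈ U, y i = ∑ i ∈ U, htResidual D S i * y i := by
  simp only [htResidual, sub_mul, one_mul, sum_sub_distrib, ite_div, ite_mul, zero_div, zero_mul,
    one_div, inv_mul_eq_div]
  rw [sum_ite_mem, inter_eq_right.2 hSU]

theorem sum_htResidual_mul_htResidual (D : Finset (Finset α)) {i j : α}
    (hi : inclusionProb D {i} ≠ 0) (hj : inclusionProb D {j} ≠ 0) :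
    ∑ S ∈ D, htResidual D S i * htResidual D S j
      = #D * ((inclusionProb D {i, j} - inclusionProb D {i} * inclusionProb D {j})
          / (inclusionProb D {i} * inclusionProb D {j})) := by
  have hexpand : ∀ S : Finset α, htResidual D S i * htResidual D S j
      = (if {i, j} ⊆ S then 1 else 0) / (inclusionProb D {i} * inclusionProb D {j})
        - (if {i} ⊆ S then 1 else 0) / inclusionProb D {i}
        - (if {j} ⊆ S then 1 else 0) / inclusionProb D {j} + 1 := by
    intro S
    simp only [htResidual, insert_subset_iff, singleton_subset_iff, ite_and]
    split_ifs <;> ring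
  simp only [hexpand, sum_add_distrib, sum_sub_distrib, ← sum_div,
    sum_ite_subset_eq_card_mul_inclusionProb, sum_const, nsmul_eq_mul, mul_one]
  field_simp
  ring

theorem horvitzThompson_variance_eq {D : Finset (Finset α)} {U : Finset α}
    (hDU : ∀ S ∈ D, S ⊆ U) (hD : D.Nonempty) (hπ : ∀ i ∈ U, inclusionProb D {i} ≠ 0)
    (y : α → ℝ) :
    (∑ S ∈ D, (∑ i ∈ S, y i / inclusionProb D {i} - ∑ i ∈ U, y i) ^ 2) / #D
      = htVariance U (fun i ↦ inclusionProb D {i}) (fun i j ↦ inclusionProb D {i, j}) y := by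
  rw [div_eq_iff (Nat.cast_ne_zero.2 hD.card_pos.ne')]
  calc ∑ S ∈ D, (∑ i ∈ S, y i / inclusionProb D {i} - ∑ i ∈ U, y i) ^ 2
      = ∑ S ∈ D, ∑ i ∈ U, ∑ j ∈ U, htResidual D S i * htResidual D S j * (y i * y j) := by
        refine sum_congr rfl fun S hS ↦ ?_
        simp_rw [sum_div_inclusionProb_sub_sum (hDU S hS), sq, sum_mul_sum, mul_mul_mul_comm]
    _ = ∑ i ∈ U, ∑ j ∈ U, (∑ S ∈ D, htResidual D S i * htResidual D S j) * (y i * y j) := by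
        simp_rw [sum_mul]
        rw [sum_comm]
        exact sum_congr rfl fun i _ ↦ sum_comm
    _ = htVariance U (fun i ↦ inclusionProb D {i}) (fun i j ↦ inclusionProb D {i, j}) y * #D := by
        rw [htVariance, add_mul, sum_mul, sum_mul, ← sum_add_distrib]
        refine sum_congr rfl fun i hi ↦ ?_
        rw [← add_sum_erase _ _ hi, sum_mul (U.erase i)]
        congr 1
        · rw [sum_htResidual_mul_htResidual D (hπ i hi) (hπ i hi),
            insert_eq_of_mem (mem_singleton_self i)]
          field_simp
        · refine sum_congr rfl fun j hj ↦ ?_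
          rw [sum_htResidual_mul_htResidual D (hπ i hi) (hπ j (mem_of_mem_erase hj))]
          ring

theorem inclusionProb_powersetCard {s t : Finset α} {r : ℕ} (hst : s ⊆ t) (hrt : r ≤ #t) :
    inclusionProb (t.powersetCard r) s = r.choose #s / (#t).choose #s := by
  rw [inclusionProb, card_powersetCard]
  rcases le_or_gt #s r with hsr | hrs
  · have hchoose : ((#t).choose r * r.choose #s : ℝ)
        = (#t).choose #s * (#t - #s).choose (r - #s) := by
      exact_mod_cast Nat.choose_mul hsr
    rw [card_filter_powersetCard_subset s t r hst hsr, div_eq_div_iff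
      (Nat.cast_ne_zero.2 (Nat.choose_pos hrt).ne')
      (Nat.cast_ne_zero.2 (Nat.choose_pos (hsr.trans hrt)).ne')]
    linear_combination hchoose.symm
  · have hempty : {S ∈ t.powersetCard r | s ⊆ S} = ∅ :=
      filter_false_of_mem fun S hS hsS ↦ (card_le_card hsS).not_gt
        ((mem_powersetCard.1 hS).2.symm ▸ hrs)
    rw [hempty, Nat.choose_eq_zero_of_lt hrs]
    simp

theorem inclusionProb_powersetCard_singleton {t : Finset α} {r : ℕ} {i : α} (hi : i ∈ t)
    (hrt : r ≤ #t) : inclusionProb (t.powersetCard r) {i} = r / #t := by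
  rw [inclusionProb_powersetCard (singleton_subset_iff.2 hi) hrt, card_singleton,
    Nat.choose_one_right, Nat.choose_one_right]

theorem inclusionProb_powersetCard_pair {t : Finset α} {r : ℕ} {i j : α} (hi : i ∈ t)
    (hj : j ∈ t) (hij : i ≠ j) (hrt : r ≤ #t) :
    inclusionProb (t.powersetCard r) {i, j} = r * (r - 1) / (#t * (#t - 1)) := by
  rw [inclusionProb_powersetCard (insert_subset hi (singleton_subset_iff.2 hj)) hrt,
    card_pair hij, Nat.cast_choose_two, Nat.cast_choose_two, div_div_div_cancel_right₀ two_ne_zero]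

theorem sum_div_inclusionProb_powersetCard {t S : Finset α} {r : ℕ}
    (hS : S ∈ t.powersetCard r) (y : α → ℝ) :
    ∑ i ∈ S, y i / inclusionProb (t.powersetCard r) {i} = #t / r * ∑ i ∈ S, y i := by
  obtain ⟨hSt, hSr⟩ := mem_powersetCard.1 hS
  have hrt : r ≤ #t := hSr ▸ card_le_card hSt
  rw [mul_sum]
  refine sum_congr rfl fun i hi ↦ ?_
  rw [inclusionProb_powersetCard_singleton (hSt hi) hrt, div_div_eq_mul_div]
  ring

end

theorem horvitz_thompson_variance_general {α : Type*} [DecidableEq α]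
    (S_v S_c : Finset α) (hsub : S_c ⊆ S_v) (τ : α → ℝ)
    (n r : ℕ) (hn : n = (S_v \ S_c).card) (hr1 : 1 ≤ r) (hrn : r ≤ n)
    (π : α → ℝ)
    (hπc : ∀ i ∈ S_c, π i = 1)
    (hπr : ∀ i ∈ S_v \ S_c, π i = (r : ℝ) / (n : ℝ))
    (π' : α → α → ℝ)
    (hπ'cc : ∀ i ∈ S_c, ∀ j ∈ S_c, π' i j = 1)
    (hπ'cr : ∀ i ∈ S_c, ∀ j ∈ S_v \ S_c, π' i j = (r : ℝ) / (n : ℝ))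
    (hπ'rc : ∀ i ∈ S_v \ S_c, ∀ j ∈ S_c, π' i j = (r : ℝ) / (n : ℝ))
    (hπ'rr : ∀ i ∈ S_v \ S_c, ∀ j ∈ S_v \ S_c,
        π' i j = ((r : ℝ) * ((r : ℝ) - 1)) / ((n : ℝ) * ((n : ℝ) - 1))) :
    (∑ S ∈ (S_v \ S_c).powersetCard r,
        ((∑ i ∈ S_c, τ i + ((n : ℝ) / (r : ℝ)) * ∑ i ∈ S, τ i) - ∑ i ∈ S_v, τ i) ^ 2)
      / (((S_v \ S_c).powersetCard r).card : ℝ)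
    = ∑ i ∈ S_v, ((1 - π i) / π i) * (τ i) ^ 2
      + ∑ i ∈ S_v, ∑ j ∈ S_v.erase i,
          ((π' i j - π i * π j) / (π i * π j)) * τ i * τ j := by
  subst hn
  set T := S_v \ S_c
  have hSc : ∀ i ∈ S_v, i ∉ T → i ∈ S_c := fun i hi hiT ↦
    by_contra fun h ↦ hiT (mem_sdiff.2 ⟨hi, h⟩)
  have hπ'_eq_mul : ∀ i ∈ S_v, ∀ j ∈ S_v, i ≠ j → i ∉ T ∨ j ∉ T → π' i j = π i * π j := by
    intro i hi j hj _ hij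
    by_cases hiT : i ∈ T <;> by_cases hjT : j ∈ T
    · rcases hij with h | h <;> contradiction
    · rw [hπ'rc i hiT j (hSc j hj hjT), hπr i hiT, hπc j (hSc j hj hjT), mul_one]
    · rw [hπ'cr i (hSc i hi hiT) j hjT, hπc i (hSc i hi hiT), hπr j hjT, one_mul]
    · rw [hπ'cc i (hSc i hi hiT) j (hSc j hj hjT), hπc i (hSc i hi hiT), hπc j (hSc j hj hjT),
        mul_one]
  have hπD0 : ∀ i ∈ T, inclusionProb (T.powersetCard r) {i} ≠ 0 := fun i hi ↦ by
    rw [inclusionProb_powersetCard_singleton hi hrn]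
    exact div_ne_zero (Nat.cast_pos.2 hr1).ne' (Nat.cast_pos.2 (card_pos.2 ⟨i, hi⟩)).ne'
  calc _ = (∑ S ∈ T.powersetCard r,
          (∑ i ∈ S, τ i / inclusionProb (T.powersetCard r) {i} - ∑ i ∈ T, τ i) ^ 2)
          / #(T.powersetCard r) := by
        congr 1
        refine sum_congr rfl fun S hS ↦ ?_
        rw [sum_div_inclusionProb_powersetCard hS, ← sum_sdiff hsub]
        ring
    _ = _ := horvitzThompson_variance_eq (fun S hS ↦ (mem_powersetCard.1 hS).1)
        (powersetCard_nonempty.2 hrn) hπD0 τ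
    _ = htVariance T π π' τ := htVariance_congr
        (fun i hi ↦ by rw [hπr i hi, inclusionProb_powersetCard_singleton hi hrn])
        (fun i hi j hj ↦ by rw [hπ'rr i hi j (mem_of_mem_erase hj), inclusionProb_powersetCard_pair
          hi (mem_of_mem_erase hj) (ne_of_mem_erase hj).symm hrn]) τ
    _ = _ := htVariance_subset sdiff_subset (fun i hi hiT ↦ hπc i (hSc i hi hiT)) hπ'_eq_mul τ

/-- Variance of the Horvitz–Thompson estimator under two-phase sampling: with a fixed
subset `S_c ⊆ S_v`, `n = (S_v \ S_c).card ≥ 2`, `1 ≤ r ≤ n`, and a simple random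
sample `S_r` of size `r` drawn uniformly from the `r`-element subsets of `S_v \ S_c`
(so expectations are averages over `(S_v \ S_c).powersetCard r`), the variance
`E[(τ̂_HT − τ)²]` of the Horvitz–Thompson estimator equals
`∑_{i ∈ S_v} ((1 − π i)/π i) (τ i)² +
 ∑_{i ∈ S_v} ∑_{j ∈ S_v, j ≠ i} ((π' i j − π i π j)/(π i π j)) τ i τ j`. -/
theorem horvitz_thompson_variance {α : Type*} [DecidableEq α]
    (S_v S_c : Finset α) (hsub : S_c ⊆ S_v) (τ : α → ℝ)
    (n r : ℕ) (hn : n = (S_v \ S_c).card) (hn2 : 2 ≤ n) (hr1 : 1 ≤ r) (hrn : r ≤ n)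
    (π : α → ℝ)
    (hπc : ∀ i ∈ S_c, π i = 1)
    (hπr : ∀ i ∈ S_v \ S_c, π i = (r : ℝ) / (n : ℝ))
    (π' : α → α → ℝ)
    (hπ'cc : ∀ i ∈ S_c, ∀ j ∈ S_c, π' i j = 1)
    (hπ'cr : ∀ i ∈ S_c, ∀ j ∈ S_v \ S_c, π' i j = (r : ℝ) / (n : ℝ))
    (hπ'rc : ∀ i ∈ S_v \ S_c, ∀ j ∈ S_c, π' i j = (r : ℝ) / (n : ℝ))
    (hπ'rr : ∀ i ∈ S_v \ S_c, ∀ j ∈ S_v \ S_c,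
        π' i j = ((r : ℝ) * ((r : ℝ) - 1)) / ((n : ℝ) * ((n : ℝ) - 1))) :
    (∑ S ∈ (S_v \ S_c).powersetCard r,
        ((∑ i ∈ S_c, τ i + ((n : ℝ) / (r : ℝ)) * ∑ i ∈ S, τ i) - ∑ i ∈ S_v, τ i) ^ 2)
      / (((S_v \ S_c).powersetCard r).card : ℝ)
    = ∑ i ∈ S_v, ((1 - π i) / π i) * (τ i) ^ 2
      + ∑ i ∈ S_v, ∑ j ∈ S_v.erase i,
          ((π' i j - π i * π j) / (π i * π j)) * τ i * τ j :=
  horvitz_thompson_variance_general S_v S_c hsub τ n r hn hr1 hrn π hπc hπr π' hπ'cc hπ'cr hπ'rc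
    hπ'rr
end
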